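/- arXiv:0809.2947 — 2 statements merged into one kernel-verified Lean document; each statement's English description precedes it below -/
import Mathlib

section
/- An integral domain D is a ∗-CICD if and only if D is completely integrally closed and A^∗ = A^v for all nonzero fractional ideals A of D. -/
open FractionalIdeal

/-- A star operation on an integral domain `D` with fraction field `K`, acting on
fractional ideals: it fixes `D`, is extensive, monotone, idempotent (all on nonzero
ideals), and commutes with multiplication by nonzero principal fractional ideals. -/
structure StarOp (D : Type*) [CommRing D] [IsDomain D] (K : Type*) [Field K]
    [Algebra D K] [IsFractionRing D K] where
  star : FractionalIdeal (nonZeroDivisors D) K → FractionalIdeal (nonZeroDivisors D) K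
  star_one : star 1 = 1
  le_star : ∀ {A}, A ≠ 0 → A ≤ star A
  star_mono : ∀ {A B}, A ≠ 0 → A ≤ B → star A ≤ star B
  star_idem : ∀ {A}, A ≠ 0 → star (star A) = star A
  star_smul : ∀ {A : FractionalIdeal (nonZeroDivisors D) K} (x : K), x ≠ 0 → A ≠ 0 →
    star (spanSingleton (nonZeroDivisors D) x * A) = spanSingleton (nonZeroDivisors D) x * star A

variable {D K : Type*} [CommRing D] [IsDomain D] [Field K] [Algebra D K] [IsFractionRing D K]

/-!
Every star operation satisfies `A^∗ ≤ A^v`, since `A^∗ A⁻¹ ≤ (A⁻¹ A)^∗ ≤ 1`. Conversely, if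
`(A A⁻¹)^∗ = D` then `A^v = A^v (A A⁻¹)^∗ ≤ (A^v A⁻¹ A)^∗ ≤ A^∗`. So in a `∗`-CICD the operation
`∗` is `v`, and then `(A A⁻¹)^v = (A A⁻¹)^∗ = D`; the converse is a rewrite.
-/

namespace FractionalIdeal

instance {R P : Type*} [CommRing R] [CommRing P] [NoZeroDivisors P] [Algebra R P]
    {S : Submonoid R} : NoZeroDivisors (FractionalIdeal S P) where
  eq_zero_or_eq_zero_of_mul_eq_zero {A B} h := by
    rw [← coeToSubmodule_eq_bot, coe_mul] at h
    simpa only [coeToSubmodule_eq_bot] using Submodule.mul_eq_bot.mp h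

protected theorem inv_ne_zero {A : FractionalIdeal (nonZeroDivisors D) K} (hA : A ≠ 0) :
    A⁻¹ ≠ 0 := by
  obtain ⟨a, ha, haA⟩ := A.isFractional
  have hmem : algebraMap D K a ∈ A⁻¹ := by
    rw [mem_inv_iff hA]
    intro y hy
    obtain ⟨r, hr⟩ := haA y hy
    exact (mem_one_iff _).mpr ⟨r, by rw [hr, Algebra.smul_def]⟩
  intro h
  rw [h, mem_zero_iff] at hmem
  exact IsFractionRing.to_map_ne_zero_of_mem_nonZeroDivisors ha hmem

protected theorem inv_mul_le_one (A : FractionalIdeal (nonZeroDivisors D) K) : A⁻¹ * A ≤ 1 := by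
  rw [mul_comm, inv_eq]
  exact mul_one_div_le_one

end FractionalIdeal

namespace StarOp

variable (s : StarOp D K) {A B : FractionalIdeal (nonZeroDivisors D) K}

theorem mul_star_le_star_mul (hB : B ≠ 0) : A * s.star B ≤ s.star (A * B) := by
  rw [mul_le]
  intro a ha x hx
  by_cases ha0 : a = 0
  · simpa only [ha0, zero_mul] using (s.star (A * B)).zero_mem
  have haA : spanSingleton (nonZeroDivisors D) a * B ≤ A * B :=
    mul_le_mul_left (spanSingleton_le_iff_mem.mpr ha) B
  have hstar : spanSingleton (nonZeroDivisors D) a * s.star B ≤ s.star (A * B) := by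
    rw [← s.star_smul a ha0 hB]
    exact s.star_mono (mul_ne_zero (spanSingleton_ne_zero_iff.mpr ha0) hB) haA
  exact hstar (mul_mem_mul (mem_spanSingleton_self _ a) hx)

theorem star_le_inv_inv (hA : A ≠ 0) : s.star A ≤ A⁻¹⁻¹ := by
  have hA' : A⁻¹ ≠ 0 := FractionalIdeal.inv_ne_zero hA
  rw [inv_eq (I := A⁻¹), le_div_iff_mul_le hA']
  calc s.star A * A⁻¹ = A⁻¹ * s.star A := mul_comm _ _
    _ ≤ s.star (A⁻¹ * A) := s.mul_star_le_star_mul hA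
    _ ≤ s.star 1 := s.star_mono (mul_ne_zero hA' hA) A.inv_mul_le_one
    _ = 1 := s.star_one

theorem inv_inv_le_star_of_star_mul_inv_eq_one (hA : A ≠ 0) (h : s.star (A * A⁻¹) = 1) :
    A⁻¹⁻¹ ≤ s.star A := by
  have hA' : A⁻¹ ≠ 0 := FractionalIdeal.inv_ne_zero hA
  have hAA' : A * A⁻¹ ≠ 0 := mul_ne_zero hA hA'
  have hA'' : A⁻¹⁻¹ ≠ 0 := FractionalIdeal.inv_ne_zero hA'
  calc A⁻¹⁻¹ = A⁻¹⁻¹ * s.star (A * A⁻¹) := by rw [h, mul_one]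
    _ ≤ s.star (A⁻¹⁻¹ * (A * A⁻¹)) := s.mul_star_le_star_mul hAA'
    _ ≤ s.star A := by
      refine s.star_mono (mul_ne_zero hA'' hAA') ?_
      calc A⁻¹⁻¹ * (A * A⁻¹) = A * (A⁻¹⁻¹ * A⁻¹) := by ring
        _ ≤ A * 1 := mul_le_mul_right A⁻¹.inv_mul_le_one A
        _ = A := mul_one A

theorem star_eq_inv_inv_of_star_mul_inv_eq_one (hA : A ≠ 0) (h : s.star (A * A⁻¹) = 1) :
    s.star A = A⁻¹⁻¹ :=
  (s.star_le_inv_inv hA).antisymm (s.inv_inv_le_star_of_star_mul_inv_eq_one hA h)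

end StarOp

/-- `D` is a `∗`-CICD iff `D` is completely integrally closed and `A^∗ = A^v`
for all nonzero fractional ideals `A`. -/
theorem starCICD_iff_CIC_and_star_eq_v (s : StarOp D K) :
    (∀ A : FractionalIdeal (nonZeroDivisors D) K, A ≠ 0 → s.star (A * A⁻¹) = 1) ↔
    ((∀ A : FractionalIdeal (nonZeroDivisors D) K, A ≠ 0 → ((A * A⁻¹)⁻¹)⁻¹ = 1) ∧
      (∀ A : FractionalIdeal (nonZeroDivisors D) K, A ≠ 0 → s.star A = (A⁻¹)⁻¹)) := by
  have hAA' {A : FractionalIdeal (nonZeroDivisors D) K} (hA : A ≠ 0) : A * A⁻¹ ≠ 0 :=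
    mul_ne_zero hA (FractionalIdeal.inv_ne_zero hA)
  constructor
  · intro hCICD
    have hv : ∀ A : FractionalIdeal (nonZeroDivisors D) K, A ≠ 0 → s.star A = A⁻¹⁻¹ :=
      fun A hA => s.star_eq_inv_inv_of_star_mul_inv_eq_one hA (hCICD A hA)
    refine ⟨fun A hA => ?_, hv⟩
    rw [← hv _ (hAA' hA)]
    exact hCICD A hA
  · rintro ⟨hCIC, hv⟩ A hA
    rw [hv _ (hAA' hA)]
    exact hCIC A hA
end

section
/- An integral domain D is a ∗-Prüfer domain if and only if ((A ∩ B)(A + B))^∗ = (AB)^∗ for all nonzero fractional ideals A and B of D. -/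
/-!
The inequality `((A ∩ B)(A + B))^∗ ≤ (AB)^∗` always holds. For the converse it suffices to treat
principal `A = (a)`, `B = (b)`, where `(a)(b)(F⁻¹) ≤ (a) ∩ (b)` for `F = (a) + (b)`; multiplying
by `F` and using `(FF⁻¹)^∗ = D` gives `ab ∈ ((A ∩ B)(A + B))^∗`.

Conversely, `∗`-invertibility is inherited by sums: if `I` and `J` are `∗`-invertible and
`((I ∩ J)(I + J))^∗ = (IJ)^∗`, then `X = (I ∩ J)I⁻¹J⁻¹ ≤ (I + J)⁻¹` and `((I + J)X)^∗ = D`, so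
`I + J` is `∗`-invertible. Since principal ideals are `∗`-invertible, induction on the number of
generators finishes the proof.
-/

open FractionalIdeal

variable {D K : Type*} [CommRing D] [IsDomain D] [Field K] [Algebra D K] [IsFractionRing D K]

namespace FractionalIdeal

section

variable {R P : Type*} [CommRing R] {S : Submonoid R} [CommRing P] [Algebra R P]

theorem inf_mul_add_le_mul (I J : FractionalIdeal S P) :
    (I ⊓ J) * (I + J) ≤ I * J := by
  rw [mul_add, ← sup_eq_add]
  refine sup_le ?_ (mul_le_mul_left inf_le_left J)
  rw [mul_comm I J]
  exact mul_le_mul_left inf_le_right I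

theorem add_ne_zero_of_left {I J : FractionalIdeal S P} (hI : I ≠ 0) : I + J ≠ 0 :=
  fun h ↦ hI (add_eq_zero.mp h).1

end

variable {I J : FractionalIdeal (nonZeroDivisors D) K}

protected theorem mul_ne_zero (hI : I ≠ 0) (hJ : J ≠ 0) : I * J ≠ 0 := by
  obtain ⟨x, hx, hxI⟩ := exists_ne_zero_mem_isInteger hI
  obtain ⟨y, hy, hyJ⟩ := exists_ne_zero_mem_isInteger hJ
  refine fun h ↦ mul_ne_zero hx hy ((IsFractionRing.to_map_eq_zero_iff (K := K)).mp ?_)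
  rw [map_mul, ← mem_zero_iff (nonZeroDivisors D), ← h]
  exact mul_mem_mul hxI hyJ

protected theorem inf_ne_zero (hI : I ≠ 0) (hJ : J ≠ 0) : I ⊓ J ≠ 0 := by
  obtain ⟨x, hx, hxI⟩ := exists_ne_zero_mem_isInteger hI
  obtain ⟨y, hy, hyJ⟩ := exists_ne_zero_mem_isInteger hJ
  have hxy : algebraMap D K (x * y) ∈ (I : Submodule D K) ⊓ J := by
    rw [Submodule.mem_inf, map_mul]
    constructor
    · simpa only [Algebra.smul_def, mul_comm] using Submodule.smul_mem _ y (mem_coe.mpr hxI)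
    · simpa only [Algebra.smul_def] using Submodule.smul_mem _ x (mem_coe.mpr hyJ)
  refine fun h ↦ mul_ne_zero hx hy ((IsFractionRing.to_map_eq_zero_iff (K := K)).mp ?_)
  rwa [← coe_inf, h, coe_zero, Submodule.mem_bot] at hxy

theorem inf_mul_add_ne_zero (hI : I ≠ 0) (hJ : J ≠ 0) : (I ⊓ J) * (I + J) ≠ 0 :=
  FractionalIdeal.mul_ne_zero (FractionalIdeal.inf_ne_zero hI hJ) (add_ne_zero_of_left hI)

theorem mul_inv_ne_zero (hI : I ≠ 0) : I * I⁻¹ ≠ 0 :=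
  (bot_lt_mul_inv hI).ne'

protected theorem inv_ne_zero_s10 (hI : I ≠ 0) : I⁻¹ ≠ 0 := by
  intro h
  exact mul_inv_ne_zero hI (by rw [h, mul_zero])

theorem mul_inv_le_one (I : FractionalIdeal (nonZeroDivisors D) K) : I * I⁻¹ ≤ 1 :=
  mul_one_div_le_one

theorem mul_mul_inv_add_le_inf (I J : FractionalIdeal (nonZeroDivisors D) K) :
    I * J * (I + J)⁻¹ ≤ I ⊓ J := by
  have hI : I * (I + J)⁻¹ ≤ 1 :=
    (mul_le_mul_left (le_add_right le_rfl) _).trans (mul_inv_le_one _)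
  have hJ : J * (I + J)⁻¹ ≤ 1 :=
    (mul_le_mul_left (le_add_left le_rfl) _).trans (mul_inv_le_one _)
  refine le_inf ?_ ?_
  · calc I * J * (I + J)⁻¹ = I * (J * (I + J)⁻¹) := mul_assoc _ _ _
      _ ≤ I * 1 := mul_le_mul_right hJ _
      _ = I := mul_one I
  · calc I * J * (I + J)⁻¹ = J * (I * (I + J)⁻¹) := by ring
      _ ≤ J * 1 := mul_le_mul_right hI _
      _ = J := mul_one J

end FractionalIdeal

namespace StarOp

variable (s : StarOp D K) {A B I J : FractionalIdeal (nonZeroDivisors D) K}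

def IsInvertible (F : FractionalIdeal (nonZeroDivisors D) K) : Prop :=
  s.star (F * F⁻¹) = 1

def IsPrufer : Prop :=
  ∀ F : FractionalIdeal (nonZeroDivisors D) K, F ≠ 0 → (F : Submodule D K).FG → s.IsInvertible F

theorem star_ne_zero (hA : A ≠ 0) : s.star A ≠ 0 :=
  fun h ↦ hA (FractionalIdeal.le_zero_iff.mp (h ▸ s.le_star hA))

theorem star_le_one (hA : A ≠ 0) (h : A ≤ 1) : s.star A ≤ 1 :=
  s.star_one ▸ s.star_mono hA h

theorem spanSingleton_mul_star_le (hA : A ≠ 0) {y : K} (hy : y ∈ B) :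
    spanSingleton _ y * s.star A ≤ s.star (A * B) := by
  rcases eq_or_ne y 0 with rfl | hy0
  · simp [spanSingleton_zero]
  rw [← s.star_smul y hy0 hA]
  refine s.star_mono (FractionalIdeal.mul_ne_zero (spanSingleton_ne_zero_iff.mpr hy0) hA) ?_
  rw [mul_comm A B]
  exact mul_le_mul_left (spanSingleton_le_iff_mem.mpr hy) A

theorem star_mul_le_star_mul (hA : A ≠ 0) : s.star A * B ≤ s.star (A * B) :=
  mul_le.mpr fun x hx y hy ↦ by
    rw [mul_comm x y]
    exact s.spanSingleton_mul_star_le hA hy (mul_mem_mul (mem_spanSingleton_self _ y) hx)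

theorem star_star_mul (hA : A ≠ 0) (hB : B ≠ 0) : s.star (s.star A * B) = s.star (A * B) := by
  have hAB := FractionalIdeal.mul_ne_zero hA hB
  refine le_antisymm ?_ (s.star_mono hAB (mul_le_mul_left (s.le_star hA) B))
  calc s.star (s.star A * B) ≤ s.star (s.star (A * B)) :=
        s.star_mono (FractionalIdeal.mul_ne_zero (s.star_ne_zero hA) hB) (s.star_mul_le_star_mul hA)
    _ = s.star (A * B) := s.star_idem hAB

theorem star_mul_star (hA : A ≠ 0) (hB : B ≠ 0) : s.star (A * s.star B) = s.star (A * B) := by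
  rw [mul_comm, s.star_star_mul hB hA, mul_comm]

theorem star_mul_eq_one (hA : A ≠ 0) (hB : B ≠ 0) (hA1 : s.star A = 1) (hB1 : s.star B = 1) :
    s.star (A * B) = 1 := by
  rw [← s.star_star_mul hA hB, hA1, one_mul, hB1]

theorem isInvertible_spanSingleton {x : K} (hx : x ≠ 0) :
    s.IsInvertible (spanSingleton (nonZeroDivisors D) x) := by
  rw [IsInvertible, spanSingleton_mul_inv K hx, s.star_one]

theorem star_mul_le_star_inf_mul_add (hI : I ≠ 0) (hJ : J ≠ 0) (h : s.IsInvertible (I + J)) :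
    s.star (I * J) ≤ s.star ((I ⊓ J) * (I + J)) := by
  have hF : I + J ≠ 0 := add_ne_zero_of_left hI
  have hIJ := FractionalIdeal.mul_ne_zero hI hJ
  calc s.star (I * J) = s.star (I * J * s.star ((I + J) * (I + J)⁻¹)) := by
        rw [show s.star _ = 1 from h, mul_one]
    _ = s.star (I * J * (I + J)⁻¹ * (I + J)) := by
        rw [s.star_mul_star hIJ (mul_inv_ne_zero hF)]
        congr 1
        ring
    _ ≤ s.star ((I ⊓ J) * (I + J)) :=
        s.star_mono (FractionalIdeal.mul_ne_zero (FractionalIdeal.mul_ne_zero hIJ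
          (FractionalIdeal.inv_ne_zero_s10 hF)) hF) (mul_le_mul_left (mul_mul_inv_add_le_inf I J) _)

variable {s}

theorem IsPrufer.mul_le_star_inf_mul_add (h : s.IsPrufer) :
    A * B ≤ s.star ((A ⊓ B) * (A + B)) := by
  refine mul_le.mpr fun a ha b hb ↦ ?_
  rcases eq_or_ne a 0 with rfl | ha0
  · simpa only [zero_mul] using FractionalIdeal.zero_mem _
  rcases eq_or_ne b 0 with rfl | hb0
  · simpa only [mul_zero] using FractionalIdeal.zero_mem _
  set I := spanSingleton (nonZeroDivisors D) a
  set J := spanSingleton (nonZeroDivisors D) b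
  have hI : I ≠ 0 := spanSingleton_ne_zero_iff.mpr ha0
  have hJ : J ≠ 0 := spanSingleton_ne_zero_iff.mpr hb0
  have hIA : I ≤ A := spanSingleton_le_iff_mem.mpr ha
  have hJB : J ≤ B := spanSingleton_le_iff_mem.mpr hb
  have hfg : ((I + J : FractionalIdeal (nonZeroDivisors D) K) : Submodule D K).FG := by
    rw [coe_add, coe_spanSingleton, coe_spanSingleton, Submodule.add_eq_sup]
    exact (Submodule.fg_span_singleton a).sup (Submodule.fg_span_singleton b)
  have hab : a * b ∈ s.star (I * J) :=
    s.le_star (FractionalIdeal.mul_ne_zero hI hJ) (mul_mem_mul (mem_spanSingleton_self _ a)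
      (mem_spanSingleton_self _ b))
  refine s.star_mono (inf_mul_add_ne_zero hI hJ) ?_
    (s.star_mul_le_star_inf_mul_add hI hJ (h _ (add_ne_zero_of_left hI) hfg) hab)
  gcongr

theorem IsPrufer.star_inf_mul_add (h : s.IsPrufer) (hA : A ≠ 0) (hB : B ≠ 0) :
    s.star ((A ⊓ B) * (A + B)) = s.star (A * B) := by
  have hAB := FractionalIdeal.mul_ne_zero hA hB
  have hinf := inf_mul_add_ne_zero hA hB
  refine le_antisymm (s.star_mono hinf (inf_mul_add_le_mul A B)) ?_
  calc s.star (A * B) ≤ s.star (s.star ((A ⊓ B) * (A + B))) :=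
        s.star_mono hAB h.mul_le_star_inf_mul_add
    _ = s.star ((A ⊓ B) * (A + B)) := s.star_idem hinf

theorem IsInvertible.add (hI : I ≠ 0) (hJ : J ≠ 0) (hIi : s.IsInvertible I)
    (hJi : s.IsInvertible J) (h : s.star ((I ⊓ J) * (I + J)) = s.star (I * J)) :
    s.IsInvertible (I + J) := by
  have hF : I + J ≠ 0 := add_ne_zero_of_left hI
  have hI' := FractionalIdeal.inv_ne_zero_s10 hI
  have hJ' := FractionalIdeal.inv_ne_zero_s10 hJ
  set X := (I ⊓ J) * I⁻¹ * J⁻¹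
  have hX0 : X ≠ 0 := FractionalIdeal.mul_ne_zero
    (FractionalIdeal.mul_ne_zero (FractionalIdeal.inf_ne_zero hI hJ) hI') hJ'
  have hX : X ≤ (I + J)⁻¹ := by
    rw [inv_eq, le_div_iff_mul_le hF, mul_add, ← sup_eq_add]
    refine sup_le ?_ ?_
    · calc X * I = (I ⊓ J) * J⁻¹ * (I * I⁻¹) := by ring
        _ ≤ J * J⁻¹ * 1 := mul_le_mul' (mul_le_mul_left inf_le_right _) (mul_inv_le_one I)
        _ ≤ 1 := by rw [mul_one]; exact mul_inv_le_one J
    · calc X * J = (I ⊓ J) * I⁻¹ * (J * J⁻¹) := by ring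
        _ ≤ I * I⁻¹ * 1 := mul_le_mul' (mul_le_mul_left inf_le_left _) (mul_inv_le_one J)
        _ ≤ 1 := by rw [mul_one]; exact mul_inv_le_one I
  have hFX : s.star ((I + J) * X) = 1 := by
    calc s.star ((I + J) * X) = s.star (s.star ((I ⊓ J) * (I + J)) * (I⁻¹ * J⁻¹)) := by
          rw [s.star_star_mul (inf_mul_add_ne_zero hI hJ) (FractionalIdeal.mul_ne_zero hI' hJ')]
          congr 1
          ring
      _ = s.star (I * I⁻¹ * (J * J⁻¹)) := by
          rw [h, s.star_star_mul (FractionalIdeal.mul_ne_zero hI hJ)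
            (FractionalIdeal.mul_ne_zero hI' hJ')]
          congr 1
          ring
      _ = 1 := s.star_mul_eq_one (mul_inv_ne_zero hI) (mul_inv_ne_zero hJ) hIi hJi
  refine le_antisymm (s.star_le_one (mul_inv_ne_zero hF) (mul_inv_le_one _)) ?_
  calc 1 = s.star ((I + J) * X) := hFX.symm
    _ ≤ s.star ((I + J) * (I + J)⁻¹) :=
        s.star_mono (FractionalIdeal.mul_ne_zero hF hX0) (mul_le_mul_right hX _)

variable (s)

theorem isPrufer_of_star_inf_mul_add
    (h : ∀ A B : FractionalIdeal (nonZeroDivisors D) K, A ≠ 0 → B ≠ 0 →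
      s.star ((A ⊓ B) * (A + B)) = s.star (A * B)) :
    s.IsPrufer := by
  suffices ∀ N : Submodule D K, N.FG → ∀ F : FractionalIdeal (nonZeroDivisors D) K,
      (F : Submodule D K) = N → F ≠ 0 → s.IsInvertible F from
    fun F hF hFG ↦ this _ hFG F rfl hF
  intro N hN
  induction N, hN using Submodule.fg_induction with
  | singleton x =>
    intro F hFx hF
    obtain rfl : F = spanSingleton _ x := coeToSubmodule_inj.mp (by rw [hFx, coe_spanSingleton])
    exact s.isInvertible_spanSingleton (spanSingleton_ne_zero_iff.mp hF)
  | sup N₁ N₂ _ _ ih₁ ih₂ =>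
    intro F hFN hF
    let F₁ : FractionalIdeal (nonZeroDivisors D) K := ⟨N₁, isFractional_of_le (hFN ▸ le_sup_left)⟩
    let F₂ : FractionalIdeal (nonZeroDivisors D) K := ⟨N₂, isFractional_of_le (hFN ▸ le_sup_right)⟩
    have hF₁₂ : F = F₁ + F₂ := coeToSubmodule_inj.mp (by rw [coe_add, hFN]; rfl)
    rw [hF₁₂] at hF ⊢
    rcases eq_or_ne F₁ 0 with h₁ | h₁
    · rw [h₁, zero_add] at hF ⊢
      exact ih₂ F₂ rfl hF
    rcases eq_or_ne F₂ 0 with h₂ | h₂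
    · rw [h₂, add_zero] at hF ⊢
      exact ih₁ F₁ rfl hF
    exact IsInvertible.add h₁ h₂ (ih₁ F₁ rfl h₁) (ih₂ F₂ rfl h₂) (h F₁ F₂ h₁ h₂)

end StarOp

/-- `D` is a `∗`-Prüfer domain iff `((A ∩ B)(A + B))^∗ = (AB)^∗` for all nonzero
fractional ideals `A`, `B`. -/
theorem starPrufer_iff_inf_sup_mul (s : StarOp D K) :
    (∀ F : FractionalIdeal (nonZeroDivisors D) K, F ≠ 0 → (F : Submodule D K).FG → s.star (F * F⁻¹) = 1) ↔
    (∀ A B : FractionalIdeal (nonZeroDivisors D) K, A ≠ 0 → B ≠ 0 →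
      s.star ((A ⊓ B) * (A + B)) = s.star (A * B)) := by
  change s.IsPrufer ↔ _
  exact ⟨fun h _ _ ↦ h.star_inf_mul_add, s.isPrufer_of_star_inf_mul_add⟩
end
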